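/- arXiv:2405.11957 — 4 statements merged into one kernel-verified Lean document; each statement's English description precedes it below -/
import Mathlib

section
/- Let φ be a continuous relation on a compact metric space X. If φ⁻¹ is topologically exact, then X is an attractor for φ. -/
open Set Metric Filter Topology

/-- The image of a set under a relation. -/
def RelImage {X : Type*} (φ : Set (X × X)) (A : Set X) : Set X :=
  {y | ∃ x ∈ A, (x, y) ∈ φ}

/-- The inverse relation. -/
def RelInv {X : Type*} (φ : Set (X × X)) : Set (X × X) :=
  {p | (p.2, p.1) ∈ φ}

/-- Iterates of a relation, acting on sets. -/
def RelIter {X : Type*} (φ : Set (X × X)) (n : ℕ) : Set X → Set X :=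
  (RelImage φ)^[n]

/-- Preimage of a set under a relation. -/
def RelPre {X : Type*} (φ : Set (X × X)) : Set X → Set X :=
  RelImage (RelInv φ)

/-- A relation is continuous if it is both upper and lower semi-continuous. -/
def RelContinuous {X : Type*} [TopologicalSpace X] (φ : Set (X × X)) : Prop :=
  (∀ B : Set X, IsClosed B → IsClosed (RelPre φ B)) ∧
  (∀ B : Set X, IsOpen B → IsOpen (RelPre φ B))

/-- `X` is an attractor for the relation `φ`. -/
def IsAttractor {X : Type*} [MetricSpace X] (φ : Set (X × X)) : Prop :=
  ∀ K : Set X, K.Nonempty → IsCompact K →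
    Tendsto (fun i => hausdorffDist (RelIter φ i K) (univ : Set X)) atTop (nhds 0)

/-- `X` is a physical attractor for the relation `φ`. -/
def IsPhysicalAttractor {X : Type*} [MetricSpace X] (φ : Set (X × X)) : Prop :=
  ∀ U : Set X, IsOpen U → U.Nonempty →
    ∃ K : Set X, K.Nonempty ∧ IsCompact K ∧ K ⊆ U ∧
      Tendsto (fun i => hausdorffDist (RelIter φ i K) (univ : Set X)) atTop (nhds 0)

/-- The relation `φ` is topologically mixing. -/
def TopMixingRel {X : Type*} [TopologicalSpace X] (φ : Set (X × X)) : Prop :=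
  ∀ W V : Set X, IsOpen W → W.Nonempty → IsOpen V → V.Nonempty →
    ∃ J : ℕ, ∀ j ≥ J, (RelIter φ j W ∩ V).Nonempty

/-- The relation `φ` is topologically exact. -/
def TopExactRel {X : Type*} [TopologicalSpace X] (φ : Set (X × X)) : Prop :=
  ∀ W : Set X, IsOpen W → W.Nonempty → ∃ j : ℕ, RelIter φ j W = univ



lemma relIter_empty {X : Type*} (φ : Set (X × X)) (n : ℕ) : RelIter φ n (∅ : Set X) = ∅ := by
  induction n with
  | zero => rfl
  | succ n ih =>
    rw [RelIter, Function.iterate_succ_apply]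
    have : RelImage φ (∅ : Set X) = ∅ := by
      ext y; simp [RelImage]
    rw [this]; exact ih

lemma relImage_swap {X : Type*} (φ : Set (X × X)) (A C : Set X) :
    (RelImage φ A ∩ C).Nonempty ↔ (A ∩ RelImage (RelInv φ) C).Nonempty := by
  constructor
  · rintro ⟨y, ⟨x, hx, hxy⟩, hyC⟩
    exact ⟨x, hx, y, hyC, hxy⟩
  · rintro ⟨x, hx, y, hyC, hxy⟩
    exact ⟨y, ⟨x, hx, hxy⟩, hyC⟩

lemma relIter_key {X : Type*} (φ : Set (X × X)) (j : ℕ) (A B : Set X) :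
    (RelIter φ j A ∩ B).Nonempty ↔ (A ∩ RelIter (RelInv φ) j B).Nonempty := by
  induction j generalizing A B with
  | zero => rfl
  | succ j ih =>
    rw [RelIter, Function.iterate_succ_apply, show RelIter (RelInv φ) (j+1) B
      = RelImage (RelInv φ) (RelIter (RelInv φ) j B) from Function.iterate_succ_apply' _ _ _]
    rw [show (RelImage φ)^[j] (RelImage φ A) = RelIter φ j (RelImage φ A) from rfl]
    rw [ih]
    exact relImage_swap φ A _

/-- if φ⁻¹ is topologically exact then X is an attractor for φ. -/
theorem stmt6 {X : Type*} [MetricSpace X] [CompactSpace X] [Nonempty X]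
    (φ : Set (X × X)) (hφ : RelContinuous φ) (h : TopExactRel (RelInv φ)) :
    IsAttractor φ := by
  intro K hK hKc
  rw [Metric.tendsto_atTop]
  intro ε hε
  -- cover X by balls of radius ε/4
  obtain ⟨t, ht⟩ := isCompact_univ.elim_finite_subcover (fun c : X => ball c (ε/4))
    (fun c => isOpen_ball) (fun x _ => mem_iUnion.2 ⟨x, mem_ball_self (by positivity)⟩)
  choose j hj using fun c : X => h (ball c (ε/4)) isOpen_ball
    (nonempty_ball.2 (by positivity))
  refine ⟨t.sup j, fun i hi => ?_⟩
  have hbound : hausdorffDist (RelIter φ i K) (univ : Set X) ≤ ε/2 := by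
    rcases eq_empty_or_nonempty (RelIter φ i K) with hS | hS
    · rw [hS, hausdorffDist_empty']
      positivity
    · apply hausdorffDist_le_of_mem_dist (by positivity)
      · intro x hx
        exact ⟨x, mem_univ x, by simp; positivity⟩
      · intro y _
        obtain ⟨c, hct, hyc⟩ := mem_iUnion₂.1 (ht (mem_univ y))
        have hjc : j c ≤ i := le_trans (Finset.le_sup hct) hi
        set m := i - j c with hm
        have him : j c + m = i := Nat.add_sub_cancel' hjc
        have hiter : RelIter φ i K = RelIter φ (j c) (RelIter φ m K) := by
          rw [← him, RelIter, Function.iterate_add_apply]; rfl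
        have hmne : (RelIter φ m K).Nonempty := by
          by_contra hne
          rw [not_nonempty_iff_eq_empty] at hne
          rw [hiter, hne, relIter_empty] at hS
          exact hS.ne_empty rfl
        have : ((RelIter φ m K) ∩ RelIter (RelInv φ) (j c) (ball c (ε/4))).Nonempty := by
          rw [hj c]
          simpa using hmne
        obtain ⟨w, hw, hwb⟩ := (relIter_key φ (j c) _ _).2 this
        refine ⟨w, by rw [hiter]; exact hw, ?_⟩
        calc dist y w ≤ dist y c + dist c w := dist_triangle _ _ _
          _ ≤ ε/4 + ε/4 := add_le_add (le_of_lt hyc) (le_of_lt (by simpa [dist_comm] using hwb))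
          _ = ε/2 := by ring
  rw [Real.dist_eq, sub_zero, abs_of_nonneg hausdorffDist_nonneg]
  calc hausdorffDist (RelIter φ i K) (univ : Set X) ≤ ε/2 := hbound
    _ < ε := by linarith
end

section
/- Let φ be a topologically exact continuous map on a compact metric space X. Then for every x₀ ∈ X there exists a backward orbit (..., x₋₂, x₋₁, x₀) with φ(x₋ᵢ₋₁ ) giving x₋ᵢ along the orbit (i.e., a sequence (x₋ᵢ)_{i≥0} with φ^{j}(x_{-i}) = x_{-i+j} appropriately, equivalently x₋ᵢ ∈ φ⁻¹(x₋ᵢ₊₁) for each i) whose image {x₋ᵢ : i ∈ ℕ} is dense in X. -/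
/-!
Exactness makes `φ` surjective, so every point has preimages under `φ^[n]`, `n ≥ 1`, in any
prescribed non-empty open set. Enumerating a countable basis `B₀, B₁, …`, pick `y₀ = x₀` and
successively `y_{k+1} ∈ B_k` with `φ^[d_k] y_{k+1} = y_k`, `d_k ≥ 1`. Concatenating these finite
backward orbit segments gives one backward orbit of `x₀` meeting every `B_k`, hence dense.
-/

open Set

def IsTopologicallyExact {X : Type*} [TopologicalSpace X] (f : X → X) : Prop :=
  ∀ W : Set X, IsOpen W → W.Nonempty → ∃ j : ℕ, f^[j] '' W = univ

section BackwardOrbit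

variable {X : Type*} {f : X → X} {y : ℕ → X} {N : ℕ → ℕ}

theorem iterate_sub_eq_of_chain (hy : ∀ k, f^[N (k + 1) - N k] (y (k + 1)) = y k)
    (hN : Monotone N) {k l : ℕ} (hkl : k ≤ l) : f^[N l - N k] (y l) = y k := by
  induction l, hkl using Nat.le_induction with
  | base => simp
  | succ l hkl ih =>
    have hsplit : N (l + 1) - N k = (N l - N k) + (N (l + 1) - N l) := by
      have := hN hkl; have := hN (Nat.le_add_right l 1); omega
    rw [hsplit, Function.iterate_add_apply, hy, ih]

theorem iterate_sub_eq_iterate_sub_of_chain (hy : ∀ k, f^[N (k + 1) - N k] (y (k + 1)) = y k)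
    (hN : Monotone N) {k l m : ℕ} (hkl : k ≤ l) (hm : m ≤ N k) :
    f^[N l - m] (y l) = f^[N k - m] (y k) := by
  have hsplit : N l - m = (N k - m) + (N l - N k) := by have := hN hkl; omega
  rw [hsplit, Function.iterate_add_apply, iterate_sub_eq_of_chain hy hN hkl]

theorem exists_backward_orbit_of_chain (hy : ∀ k, f^[N (k + 1) - N k] (y (k + 1)) = y k)
    (hN : StrictMono N) (hN0 : N 0 = 0) :
    ∃ x : ℕ → X, x 0 = y 0 ∧ (∀ i, f (x (i + 1)) = x i) ∧ ∀ k, x (N k) = y k := by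
  set x : ℕ → X := fun i ↦ f^[N i - i] (y i)
  have hx : ∀ {i k}, i ≤ N k → f^[N k - i] (y k) = x i := by
    intro i k hi
    rcases le_total i k with hik | hki
    · exact iterate_sub_eq_iterate_sub_of_chain hy hN.monotone hik (hN.id_le i)
    · exact (iterate_sub_eq_iterate_sub_of_chain hy hN.monotone hki hi).symm
  refine ⟨x, by simp [x, hN0], fun i ↦ ?_, fun k ↦ by simpa using (hx le_rfl).symm⟩
  have hi : i + 1 ≤ N (i + 1) := hN.id_le _
  rw [← Function.iterate_succ_apply' f, ← hx (k := i + 1) (by omega)]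
  congr 2
  omega

end BackwardOrbit

namespace IsTopologicallyExact

variable {X : Type*} [TopologicalSpace X] {f : X → X}

theorem surjective [T1Space X] (hf : IsTopologicallyExact f) : Function.Surjective f := by
  rcases subsingleton_or_nontrivial X with hX | hX
  · exact fun y ↦ ⟨y, Subsingleton.elim _ _⟩
  obtain ⟨q⟩ := hX.to_nonempty
  obtain ⟨p, hpq⟩ := exists_ne q
  -- `{q}ᶜ` is a proper open set, so it needs at least one iterate to cover `X`.
  obtain ⟨j, hj⟩ := hf {q}ᶜ isOpen_compl_singleton ⟨p, hpq⟩
  cases j with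
  | zero => simpa using congrArg (q ∈ ·) hj
  | succ j =>
    intro y
    obtain ⟨w, -, hw⟩ := hj.symm ▸ mem_univ y
    exact ⟨f^[j] w, by rwa [← Function.iterate_succ_apply' f]⟩

theorem exists_iterate_succ_eq [T1Space X] (hf : IsTopologicallyExact f) {W : Set X}
    (hW : IsOpen W) (hne : W.Nonempty) (y : X) : ∃ z ∈ W, ∃ n : ℕ, f^[n + 1] z = y := by
  obtain ⟨y', rfl⟩ := hf.surjective y
  obtain ⟨j, hj⟩ := hf W hW hne
  obtain ⟨z, hzW, hz⟩ := hj.symm ▸ mem_univ y'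
  exact ⟨z, hzW, j, by rw [Function.iterate_succ_apply', hz]⟩

theorem exists_backward_orbit_meets [T1Space X] (hf : IsTopologicallyExact f) (B : ℕ → Set X)
    (hBo : ∀ k, IsOpen (B k)) (hBne : ∀ k, (B k).Nonempty) (x₀ : X) :
    ∃ x : ℕ → X, x 0 = x₀ ∧ (∀ i, f (x (i + 1)) = x i) ∧ ∀ k, (B k ∩ range x).Nonempty := by
  choose g hgB n hgn using fun k ↦ hf.exists_iterate_succ_eq (hBo k) (hBne k)
  let y : ℕ → X := fun k ↦ Nat.rec (motive := fun _ ↦ X) x₀ (fun k yk ↦ g k yk) k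
  let N : ℕ → ℕ := fun k ↦ ∑ i ∈ Finset.range k, (n i (y i) + 1)
  have hNsucc : ∀ k, N (k + 1) = N k + (n k (y k) + 1) := fun k ↦ Finset.sum_range_succ _ _
  have hy : ∀ k, f^[N (k + 1) - N k] (y (k + 1)) = y k := fun k ↦ by
    rw [hNsucc, Nat.add_sub_cancel_left]
    exact hgn k (y k)
  have hN : StrictMono N := strictMono_nat_of_lt_succ fun k ↦ by rw [hNsucc]; omega
  obtain ⟨x, hx0, hxf, hxN⟩ := exists_backward_orbit_of_chain hy hN (Finset.sum_range_zero _)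
  exact ⟨x, hx0, hxf, fun k ↦ ⟨y (k + 1), hgB k (y k), N (k + 1), hxN (k + 1)⟩⟩

theorem exists_dense_backward_orbit [T1Space X] [SecondCountableTopology X]
    (hf : IsTopologicallyExact f) (x₀ : X) :
    ∃ x : ℕ → X, x 0 = x₀ ∧ (∀ i, f (x (i + 1)) = x i) ∧ Dense (range x) := by
  obtain ⟨b, hbc, hbe, hb⟩ := TopologicalSpace.exists_countable_basis X
  have hbne : b.Nonempty := by
    obtain ⟨o, ho, -⟩ := mem_sUnion.1 (hb.sUnion_eq.symm ▸ mem_univ x₀)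
    exact ⟨o, ho⟩
  obtain ⟨B, rfl⟩ := hbc.exists_eq_range hbne
  obtain ⟨x, hx0, hxf, hxB⟩ := hf.exists_backward_orbit_meets B
    (fun k ↦ hb.isOpen (mem_range_self k))
    (fun k ↦ nonempty_iff_ne_empty.2 fun h ↦ hbe (h ▸ mem_range_self k)) x₀
  refine ⟨x, hx0, hxf, hb.dense_iff.2 ?_⟩
  rintro - ⟨k, rfl⟩ -
  exact hxB k

end IsTopologicallyExact

theorem stmt8_general {X : Type*} [MetricSpace X] [CompactSpace X]
    (φ : X → X)
    (hexact : ∀ W : Set X, IsOpen W → W.Nonempty → ∃ j : ℕ, φ^[j] '' W = univ)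
    (x₀ : X) :
    ∃ x : ℕ → X, x 0 = x₀ ∧ (∀ i : ℕ, φ (x (i + 1)) = x i) ∧
      Dense (Set.range x) :=
  IsTopologicallyExact.exists_dense_backward_orbit hexact x₀

/-- every point of a compact metric space admits a backward orbit, under a
topologically exact continuous map, whose image is dense. -/
theorem stmt8 {X : Type*} [MetricSpace X] [CompactSpace X] [Nonempty X]
    (φ : X → X) (hc : Continuous φ)
    (hexact : ∀ W : Set X, IsOpen W → W.Nonempty → ∃ j : ℕ, φ^[j] '' W = univ)
    (x₀ : X) :
    ∃ x : ℕ → X, x 0 = x₀ ∧ (∀ i : ℕ, φ (x (i + 1)) = x i) ∧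
      Dense (Set.range x) :=
  stmt8_general φ hexact x₀
end

section
/- Every symmetric totally forward minimal IFS 𝓕 = {f₁,...,f_k} of homeomorphisms on a compact metric space X is topologically exact. -/
open Set Metric Filter Topology

/-- Iterate of an IFS along a word: wordIter f ω n = f (ω (n-1)) ∘ ... ∘ f (ω 0). -/
def wordIter {X : Type*} {k : ℕ} (f : Fin k → X → X) (ω : ℕ → Fin k) : ℕ → X → X
  | 0 => id
  | n + 1 => f (ω n) ∘ wordIter f ω n

/-- The (extended) Hutchinson operator of the IFS f. -/
def Hutch {X : Type*} {k : ℕ} (f : Fin k → X → X) (A : Set X) : Set X :=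
  ⋃ i : Fin k, f i '' A

/-- Composition of the maps of an IFS indexed by a list (an element of the semigroup,
for nonempty lists). -/
def compList {X : Type*} {k : ℕ} (f : Fin k → X → X) : List (Fin k) → X → X
  | [] => id
  | i :: l => f i ∘ compList f l

/-- every symmetric totally forward minimal IFS of homeomorphisms of a
compact metric space is topologically exact. -/
theorem stmt13 {X : Type*} [MetricSpace X] [CompactSpace X] [Nonempty X]
    {k : ℕ} (f : Fin k → X ≃ₜ X)
    (hsym : ∀ i : Fin k, ∃ j : Fin k, ∀ x : X, f j x = (f i).symm x)
    (hmin : ∀ n : ℕ, 1 ≤ n → ∀ A : Set X, A.Nonempty → IsClosed A →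
      (∀ ω : ℕ → Fin k, wordIter (fun i => (f i : X → X)) ω n '' A ⊆ A) → A = univ) :
    ∀ U : Set X, IsOpen U → U.Nonempty →
      ∃ n : ℕ, (Hutch (fun i => (f i : X → X)))^[n] U = univ := by
  intro U hU hUne
  classical
  by_cases hk : k = 0
  · -- no maps: minimality forces X to be a singleton, take n = 0
    subst hk
    refine ⟨0, ?_⟩
    simp only [Function.iterate_zero, id_eq]
    obtain ⟨x, hx⟩ := hUne
    have h1 : ({x} : Set X) = univ := by
      apply hmin 1 le_rfl {x} ⟨x, rfl⟩ isClosed_singleton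
      intro ω; exact (ω 0).elim0
    apply eq_univ_of_univ_subset
    rw [← h1]
    intro y hy
    rw [mem_singleton_iff] at hy
    rw [hy]; exact hx
  · have hk1 : 0 < k := Nat.pos_of_ne_zero hk
    set F : Set X → Set X := Hutch (fun i => (f i : X → X)) with hF
    have hmem : ∀ (i : Fin k) (S : Set X) (x : X), x ∈ S → (f i : X → X) x ∈ F S := by
      intro i S x hx
      exact Set.mem_iUnion.2 ⟨i, Set.mem_image_of_mem _ hx⟩
    have hopen : ∀ n, IsOpen (F^[n] U) := by
      intro n
      induction n with
      | zero => simpa using hU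
      | succ n ih =>
        rw [Function.iterate_succ_apply']
        exact isOpen_iUnion fun i => (f i).isOpenMap _ ih
    have hsub : ∀ S : Set X, S ⊆ F (F S) := by
      intro S x hx
      obtain ⟨j, hj⟩ := hsym ⟨0, hk1⟩
      have hxx : (f j : X → X) ((f ⟨0, hk1⟩ : X → X) x) = x := by
        rw [hj]; exact (f ⟨0, hk1⟩).symm_apply_apply x
      rw [← hxx]
      exact hmem j _ _ (hmem _ S x hx)
    have hstep : ∀ n, F^[2*n] U ⊆ F^[2*(n+1)] U := by
      intro n
      have h2 : 2*(n+1) = 2 + 2*n := by ring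
      rw [h2, Function.iterate_add_apply, Function.iterate_succ_apply',
        Function.iterate_one]
      exact hsub _
    have hmono : Monotone (fun n => F^[2*n] U) := monotone_nat_of_le_succ hstep
    set V : Set X := ⋃ n, F^[2*n] U with hV
    have hVopen : IsOpen V := isOpen_iUnion fun n => hopen _
    obtain ⟨x₀, hx₀⟩ := hUne
    have hUV : U ⊆ V := fun x hx => mem_iUnion.2 ⟨0, by simpa using hx⟩
    have hVuniv : V = univ := by
      by_contra hne
      have hA : (Vᶜ).Nonempty := by
        rcases eq_empty_or_nonempty Vᶜ with h | h
        · exact absurd (compl_empty_iff.mp h) hne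
        · exact h
      have hinv : ∀ ω : ℕ → Fin k,
          wordIter (fun i => (f i : X → X)) ω 2 '' Vᶜ ⊆ Vᶜ := by
        intro ω x hx
        obtain ⟨y, hy, rfl⟩ := hx
        simp only [wordIter, Function.comp_apply, id_eq]
        intro hcon
        apply hy
        obtain ⟨j0, hj0⟩ := hsym (ω 0)
        obtain ⟨j1, hj1⟩ := hsym (ω 1)
        obtain ⟨n, hn⟩ := mem_iUnion.1 hcon
        have hy' : y = (f j0 : X → X) ((f j1 : X → X)
            ((f (ω 1) : X → X) ((f (ω 0) : X → X) y))) := by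
          rw [hj1, (f (ω 1)).symm_apply_apply, hj0, (f (ω 0)).symm_apply_apply]
        rw [hV]
        refine mem_iUnion.2 ⟨n + 1, ?_⟩
        have h2 : 2*(n+1) = 2 + 2*n := by ring
        rw [h2, Function.iterate_add_apply, Function.iterate_succ_apply',
          Function.iterate_one, hy']
        exact hmem _ _ _ (hmem _ _ _ hn)
      have := hmin 2 (by norm_num) Vᶜ hA hVopen.isClosed_compl hinv
      have hxc : x₀ ∈ Vᶜ := by rw [this]; trivial
      exact hxc (hUV hx₀)
    obtain ⟨t, ht⟩ := isCompact_univ.elim_finite_subcover (fun n => F^[2*n] U)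
      (fun n => hopen _) hVuniv.ge
    refine ⟨2 * t.sup id, eq_univ_of_univ_subset ?_⟩
    intro x _
    obtain ⟨n, hn, hx⟩ := mem_iUnion₂.1 (ht (mem_univ x))
    exact hmono (Finset.le_sup (f := id) hn) hx
end

section
/- Consider the torus 𝕋² = ℝ²/ℤ² and the homeomorphisms f₁(x,y) = (x, y+x) and f₂(x,y) = (x+y, y). The orbit of the point p = (1/2, 1/2) under the semigroup generated by {f₁, f₂} equals the finite set {(1/2,1/2), (1/2,0), (0,1/2)}; consequently, the IFS {f₁, f₂} is not topologically exact. -/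
open Set Metric Filter Topology

lemma half_add_half : (((1:ℝ)/2 : ℝ) : AddCircle (1:ℝ)) + (((1:ℝ)/2 : ℝ) : AddCircle (1:ℝ)) = 0 := by
  rw [← AddCircle.coe_add]
  norm_num

lemma half_ne_zero : (((1:ℝ)/2 : ℝ) : AddCircle (1:ℝ)) ≠ 0 := by
  intro hc
  rw [AddCircle.coe_eq_zero_iff] at hc
  obtain ⟨n, hn⟩ := hc
  have h1 : (n : ℝ) = 1/2 := by simpa [zsmul_eq_mul] using hn
  have h2 : ((2*n : ℤ) : ℝ) = ((1:ℤ) : ℝ) := by push_cast; linarith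
  have h3 := Int.cast_injective (α := ℝ) h2
  omega

/-- on the 2-torus, with f₁(x,y) = (x, y+x) and f₂(x,y) = (x+y, y), the
orbit of p = (1/2, 1/2) under the generated semigroup (together with p) is the finite
set {(1/2,1/2), (1/2,0), (0,1/2)}, and consequently the IFS {f₁, f₂} is not
topologically exact. -/
theorem stmt15
    (f : Fin 2 → (AddCircle (1 : ℝ) × AddCircle (1 : ℝ)) →
      (AddCircle (1 : ℝ) × AddCircle (1 : ℝ)))
    (hf0 : f 0 = fun q => (q.1, q.2 + q.1))
    (hf1 : f 1 = fun q => (q.1 + q.2, q.2)) :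
    (let h : AddCircle (1 : ℝ) := (((1 : ℝ) / 2 : ℝ) : AddCircle (1 : ℝ))
     let p : AddCircle (1 : ℝ) × AddCircle (1 : ℝ) := (h, h)
     {q | ∃ l : List (Fin 2), compList f l p = q} =
       ({(h, h), (h, 0), (0, h)} :
         Set (AddCircle (1 : ℝ) × AddCircle (1 : ℝ)))) ∧
    ¬ (∀ U : Set (AddCircle (1 : ℝ) × AddCircle (1 : ℝ)), IsOpen U → U.Nonempty →
        ∃ n : ℕ, (Hutch f)^[n] U = univ) := by
  set h : AddCircle (1 : ℝ) := (((1 : ℝ) / 2 : ℝ) : AddCircle (1 : ℝ)) with hh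
  have hhh : h + h = 0 := half_add_half
  have hne : h ≠ 0 := half_ne_zero
  constructor
  · -- orbit equality
    ext q
    simp only [Set.mem_setOf_eq, Set.mem_insert_iff, Set.mem_singleton_iff]
    constructor
    · rintro ⟨l, rfl⟩
      induction l with
      | nil => simp [compList]
      | cons i l ih =>
        simp only [compList, Function.comp_apply]
        rcases ih with h1 | h1 | h1 <;> rw [h1] <;> fin_cases i <;>
          simp [hf0, hf1, hhh, hne]
    · rintro (rfl | rfl | rfl)
      · exact ⟨[], rfl⟩
      · exact ⟨[0], by simp [compList, hf0, hhh]⟩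
      · exact ⟨[1], by simp [compList, hf1, hhh]⟩
  · -- not topologically exact
    intro hexact
    have hU : IsOpen ({((0 : AddCircle (1:ℝ)), (0 : AddCircle (1:ℝ)))}ᶜ :
        Set (AddCircle (1 : ℝ) × AddCircle (1 : ℝ))) := isOpen_compl_singleton
    have hNe : ({((0 : AddCircle (1:ℝ)), (0 : AddCircle (1:ℝ)))}ᶜ :
        Set (AddCircle (1 : ℝ) × AddCircle (1 : ℝ))).Nonempty := by
      refine ⟨(h, h), ?_⟩
      simp only [Set.mem_compl_iff, Set.mem_singleton_iff]
      intro hc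
      exact hne (congrArg Prod.fst hc)
    obtain ⟨n, hn⟩ := hexact _ hU hNe
    -- show (0,0) never in the iterate
    have key : ∀ m : ℕ, ((0 : AddCircle (1:ℝ)), (0 : AddCircle (1:ℝ))) ∉
        (Hutch f)^[m] ({((0 : AddCircle (1:ℝ)), (0 : AddCircle (1:ℝ)))}ᶜ :
          Set (AddCircle (1 : ℝ) × AddCircle (1 : ℝ))) := by
      intro m
      induction m with
      | zero => simp
      | succ m ih =>
        rw [Function.iterate_succ_apply']
        intro hm
        simp only [Hutch, Set.mem_iUnion, Set.mem_image] at hm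
        obtain ⟨i, q, hq, hfq⟩ := hm
        apply ih
        have : q = (0, 0) := by
          obtain hi | hi : i = 0 ∨ i = 1 := by omega
          · subst hi; rw [hf0] at hfq
            have h1 : q.1 = 0 := congrArg Prod.fst hfq
            have h2 : q.2 + q.1 = 0 := congrArg Prod.snd hfq
            rw [h1, add_zero] at h2
            exact Prod.ext h1 h2
          · subst hi; rw [hf1] at hfq
            have h2 : q.2 = 0 := congrArg Prod.snd hfq
            have h1 : q.1 + q.2 = 0 := congrArg Prod.fst hfq
            rw [h2, add_zero] at h1
            exact Prod.ext h1 h2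
        rwa [this] at hq
    exact key n (hn ▸ Set.mem_univ _)
end
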